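/- Let G be a connected bridgeless cubic graph in which every 2-factor consists only of 5-cycles. Then G does not contain a 4-cycle and a triangle sharing an edge. -/

import Mathlib

/-! Multigraphs: vertex type `V`, edge type `E`, incidence map `ends : E → Sym2 V`. -/

namespace Mg

variable {V E : Type}

/-- No loops: no edge has equal endpoints. -/
def NoLoops (ends : E → Sym2 V) : Prop := ∀ e, ¬ (ends e).IsDiag

/-- Cubic: every vertex is incident with exactly three edges. -/
def IsCubic (ends : E → Sym2 V) : Prop := ∀ v, {e | v ∈ ends e}.ncard = 3

/-- Reachability using only edges in `F`. -/
def Reach (ends : E → Sym2 V) (F : Set E) : V → V → Prop :=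
  Relation.ReflTransGen (fun a b => ∃ e ∈ F, ends e = s(a, b))

/-- Connected. -/
def Connected (ends : E → Sym2 V) : Prop := ∀ v w, Reach ends Set.univ v w

/-- Bridgeless: the endpoints of each edge remain joined after its removal. -/
def Bridgeless (ends : E → Sym2 V) : Prop :=
  ∀ e v w, ends e = s(v, w) → Reach ends {f | f ≠ e} v w

/-- A 2-factor: every vertex is incident with exactly two edges of `F`. -/
def IsTwoFactor (ends : E → Sym2 V) (F : Set E) : Prop :=
  ∀ v, {e | e ∈ F ∧ v ∈ ends e}.ncard = 2

/-- The component of `v` in the spanning subgraph with edge set `F`. -/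
def component (ends : E → Sym2 V) (F : Set E) (v : V) : Set V := {w | Reach ends F v w}

/-- Every 2-factor consists only of 5-cycles: each component of any 2-factor
has exactly five vertices. -/
def TwoFactorsAllC5 (ends : E → Sym2 V) : Prop :=
  ∀ F : Set E, IsTwoFactor ends F → ∀ v, (component ends F v).ncard = 5

/-- A perfect matching: every vertex is incident with exactly one edge of `M`. -/
def IsPerfectMatching (ends : E → Sym2 V) (M : Set E) : Prop :=
  ∀ v, ∃! e, e ∈ M ∧ v ∈ ends e

/-- A cycle of length `n`: `n` distinct vertices and `n` distinct edges, cyclically. -/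
def HasCycle (ends : E → Sym2 V) (n : ℕ) : Prop :=
  ∃ (c : ZMod n → V) (f : ZMod n → E), Function.Injective c ∧ Function.Injective f ∧
    ∀ i, ends (f i) = s(c i, c (i + 1))

end Mg

/-!
Every edge `ta` of a connected bridgeless cubic graph lies in a perfect matching: by Tutte's
theorem applied to `G - a - t`, since each odd component of `G - S` sends at least three edges
into `S`. The complement of a perfect matching is a 2-factor, and a 2-factor crosses every edge
cut an even number of times. Hence if at most two edges leave a vertex set `W`, some 2-factor
avoids all of them, one of its 5-cycles lies inside `W`, and `|W| ≥ 5`.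

Let the triangle `abt` share the edge `ab` with the 4-cycle `abed`. If `t` lies on the 4-cycle,
a triangle edge is a chord of it; then its four vertices span five edges, so at most two edges
leave them, which is impossible. Otherwise take a perfect matching containing `ta`. The
complementary 2-factor contains the path `t b a d e`, so its 5-cycle through `a` has vertex set
`{a, b, t, d, e}`. This set spans the four edges of the 4-cycle, `bt`, `ta` and the second
2-factor edge at `t`, so at most one edge leaves it, while an odd set is left by at least three.
-/

namespace Mg

variable {V E : Type} {ends : E → Sym2 V}

def cut (ends : E → Sym2 V) (W : Set V) : Set E :=
  {e | ∃ v w, ends e = s(v, w) ∧ v ∈ W ∧ w ∉ W}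

def inner (ends : E → Sym2 V) (W : Set V) : Set E :=
  {e | ∀ v ∈ ends e, v ∈ W}

lemma exists_ends_eq (ends : E → Sym2 V) (e : E) : ∃ v w, ends e = s(v, w) := by
  induction ends e using Sym2.ind with
  | _ v w => exact ⟨v, w, rfl⟩

lemma mem_inner_iff {W : Set V} {e : E} {x y : V} (h : ends e = s(x, y)) :
    e ∈ inner ends W ↔ x ∈ W ∧ y ∈ W := by
  simp [inner, h]

lemma mem_cut_iff {W : Set V} {e : E} {x y : V} (h : ends e = s(x, y)) :
    e ∈ cut ends W ↔ x ∈ W ∧ y ∉ W ∨ y ∈ W ∧ x ∉ W := by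
  simp only [cut, Set.mem_ofPred_eq, h, Sym2.eq_iff]
  constructor
  · rintro ⟨v, w, ⟨rfl, rfl⟩ | ⟨rfl, rfl⟩, hv, hw⟩ <;> simp [hv, hw]
  · rintro (⟨hx, hy⟩ | ⟨hy, hx⟩)
    · exact ⟨x, y, Or.inl ⟨rfl, rfl⟩, hx, hy⟩
    · exact ⟨y, x, Or.inr ⟨rfl, rfl⟩, hy, hx⟩

lemma cut_compl (W : Set V) : cut ends Wᶜ = cut ends W := by
  ext e
  constructor <;>
  · rintro ⟨v, w, he, hv, hw⟩
    exact ⟨w, v, he.trans Sym2.eq_swap, by simpa using hw, by simpa using hv⟩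

lemma inner_mono {W W' : Set V} (h : W ⊆ W') : inner ends W ⊆ inner ends W' :=
  fun _ he v hv => h (he v hv)

lemma exists_mem_cut_of_reach {F : Set E} {W : Set V} {x y : V} (h : Reach ends F x y)
    (hx : x ∈ W) (hy : y ∉ W) : ∃ e ∈ F, e ∈ cut ends W := by
  induction h with
  | refl => exact absurd hx hy
  | @tail w z _ hwz ih =>
    obtain ⟨e, heF, he⟩ := hwz
    by_cases hw : w ∈ W
    · exact ⟨e, heF, w, z, he, hw, hy⟩
    · exact ih hw

lemma mem_component_of_mem_ends {F : Set E} {x v w : V} {f : E}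
    (hv : v ∈ component ends F x) (hf : f ∈ F) (hvf : v ∈ ends f) (hwf : w ∈ ends f) :
    w ∈ component ends F x := by
  by_cases hvw : v = w
  · exact hvw ▸ hv
  · exact hv.tail ⟨f, hf, (Sym2.mem_and_mem_iff hvw).mp ⟨hvf, hwf⟩⟩

lemma component_subset {F : Set E} {W : Set V} (hF : Disjoint F (cut ends W)) {x : V}
    (hx : x ∈ W) : component ends F x ⊆ W := by
  intro y hy
  by_contra hyW
  obtain ⟨e, heF, hecut⟩ := exists_mem_cut_of_reach hy hx hyW
  exact Set.disjoint_left.mp hF heF hecut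

lemma two_le_ncard_cut [Finite E] (hb : Bridgeless ends) (hconn : Connected ends) {W : Set V}
    (hW : W.Nonempty) (hW' : Wᶜ.Nonempty) : 2 ≤ (cut ends W).ncard := by
  obtain ⟨x, hx⟩ := hW
  obtain ⟨y, hy⟩ := hW'
  obtain ⟨e, -, v, w, hvw, hv, hw⟩ := exists_mem_cut_of_reach (hconn x y) hx hy
  obtain ⟨e', he'e, he'⟩ := exists_mem_cut_of_reach (hb e v w hvw) hv hw
  exact (Set.one_lt_ncard_iff (Set.toFinite _)).mpr ⟨e, e', ⟨v, w, hvw, hv, hw⟩, he', Ne.symm he'e⟩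

lemma IsPerfectMatching.eq_of_mem_ends {M : Set E} (hM : IsPerfectMatching ends M) {e g : E}
    {v : V} (he : e ∈ M) (hg : g ∈ M) (hve : v ∈ ends e) (hvg : v ∈ ends g) : g = e :=
  (hM v).unique ⟨hg, hvg⟩ ⟨he, hve⟩

lemma isPerfectMatching_range {p : V → E} (hp : ∀ v, v ∈ ends (p v))
    (hp' : ∀ v w, w ∈ ends (p v) → p w = p v) : IsPerfectMatching ends (Set.range p) :=
  fun v => ⟨p v, ⟨⟨v, rfl⟩, hp v⟩, fun _ ⟨⟨w, hw⟩, hv⟩ => hw ▸ (hp' w v (hw ▸ hv)).symm⟩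

lemma IsPerfectMatching.isTwoFactor_compl [Finite E] {M : Set E}
    (hM : IsPerfectMatching ends M) (hc : IsCubic ends) : IsTwoFactor ends Mᶜ := by
  intro v
  obtain ⟨g, ⟨hgM, hvg⟩, -⟩ := hM v
  have : {e | e ∈ Mᶜ ∧ v ∈ ends e} = {e | v ∈ ends e} \ {g} := by
    ext e
    simp only [Set.mem_ofPred_eq, Set.mem_compl_iff, Set.mem_sdiff, Set.mem_singleton_iff]
    exact ⟨fun ⟨heM, hve⟩ => ⟨hve, fun h => heM (h ▸ hgM)⟩,
      fun ⟨hve, hne⟩ => ⟨fun heM => hne (hM.eq_of_mem_ends hgM heM hvg hve), hve⟩⟩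
  rw [this, Set.ncard_sdiff_singleton_of_mem (show g ∈ {e | v ∈ ends e} from hvg), hc v]

lemma IsTwoFactor.notMem_of_mem_ends [Finite E] {F : Set E} (hF : IsTwoFactor ends F) {v : V}
    {e₁ e₂ g : E} (he₁ : e₁ ∈ F ∧ v ∈ ends e₁) (he₂ : e₂ ∈ F ∧ v ∈ ends e₂) (hg : v ∈ ends g)
    (h₁₂ : e₁ ≠ e₂) (hg₁ : g ≠ e₁) (hg₂ : g ≠ e₂) : g ∉ F := fun hgF => by
  have h3 : 2 < {e | e ∈ F ∧ v ∈ ends e}.ncard := (Set.two_lt_ncard_iff (Set.toFinite _)).mpr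
    ⟨e₁, e₂, g, he₁, he₂, ⟨hgF, hg⟩, h₁₂, hg₁.symm, hg₂.symm⟩
  rw [hF v] at h3
  exact lt_irrefl _ h3

def simpleGraph (ends : E → Sym2 V) : SimpleGraph V :=
  SimpleGraph.fromRel fun v w => ∃ e, ends e = s(v, w)

lemma simpleGraph_adj_of_ends (hl : NoLoops ends) {e : E} {v w : V} (he : ends e = s(v, w)) :
    (simpleGraph ends).Adj v w :=
  ⟨fun h => hl e (by simp [he, h]), Or.inl ⟨e, he⟩⟩

lemma exists_ends_of_simpleGraph_adj {v w : V} (h : (simpleGraph ends).Adj v w) :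
    ∃ e, ends e = s(v, w) := by
  obtain ⟨-, ⟨e, he⟩ | ⟨e, he⟩⟩ := h
  exacts [⟨e, he⟩, ⟨e, he.trans Sym2.eq_swap⟩]

def IsCycle (ends : E → Sym2 V) {n : ℕ} (c : ZMod n → V) (f : ZMod n → E) : Prop :=
  Function.Injective c ∧ Function.Injective f ∧ ∀ i, ends (f i) = s(c i, c (i + 1))

namespace IsCycle

variable {n : ℕ} {c : ZMod n → V} {f : ZMod n → E}

lemma rotate (h : IsCycle ends c f) (i : ZMod n) :
    IsCycle ends (fun k => c (i + k)) (fun k => f (i + k)) :=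
  ⟨h.1.comp (add_right_injective i), h.2.1.comp (add_right_injective i),
    fun k => by rw [h.2.2, add_assoc]⟩

lemma reflect (h : IsCycle ends c f) : IsCycle ends (fun k => c (1 - k)) (fun k => f (-k)) :=
  ⟨h.1.comp sub_right_injective, h.2.1.comp neg_injective,
    fun k => by rw [h.2.2, Sym2.eq_swap]; congr 2 <;> ring⟩

lemma mem_ends_left (h : IsCycle ends c f) (k : ZMod n) : c k ∈ ends (f k) := by
  rw [h.2.2]; exact Sym2.mem_mk_left _ _

lemma mem_ends_right (h : IsCycle ends c f) (k : ZMod n) : c (k + 1) ∈ ends (f k) := by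
  rw [h.2.2]; exact Sym2.mem_mk_right _ _

lemma mem_range_of_mem_ends (h : IsCycle ends c f) {k : ZMod n} {v : V} (hv : v ∈ ends (f k)) :
    v ∈ Set.range c := by
  rw [h.2.2, Sym2.mem_iff] at hv
  rcases hv with rfl | rfl <;> exact ⟨_, rfl⟩

lemma notMem_range_of_mem_ends (h : IsCycle ends c f) {v : V} (hv : v ∉ Set.range c) {g : E}
    (hg : v ∈ ends g) : g ∉ Set.range f := by
  rintro ⟨k, rfl⟩
  exact hv (h.mem_range_of_mem_ends hg)

lemma range_subset_inner (h : IsCycle ends c f) : Set.range f ⊆ inner ends (Set.range c) := by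
  rintro _ ⟨k, rfl⟩ v hv
  exact h.mem_range_of_mem_ends hv

lemma eq_of_ends_eq (h : IsCycle ends c f) {k i j : ZMod n} (he : ends (f k) = s(c i, c j)) :
    (i = k ∧ j = k + 1) ∨ (i = k + 1 ∧ j = k) := by
  rw [h.2.2, Sym2.eq_iff] at he
  rcases he with ⟨hi, hj⟩ | ⟨hj, hi⟩
  · exact Or.inl ⟨h.1 hi.symm, h.1 hj.symm⟩
  · exact Or.inr ⟨h.1 hi.symm, h.1 hj.symm⟩

lemma ncard_range (h : IsCycle ends c f) : (Set.range c).ncard = n := by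
  rw [Set.ncard_range_of_injective h.1, Nat.card_zmod]

lemma ncard_range_edges (h : IsCycle ends c f) : (Set.range f).ncard = n := by
  rw [Set.ncard_range_of_injective h.2.1, Nat.card_zmod]

end IsCycle

lemma mem_compl_of_square_common_neighbour [Finite E] (hc : IsCubic ends) {c : ZMod 4 → V}
    {f : ZMod 4 → E} (hsq : IsCycle ends c f) {t : V} (ht : t ∉ Set.range c) {g₁ g₂ : E}
    (hg₁ : ends g₁ = s(c 1, t)) (hg₂ : ends g₂ = s(t, c 0)) {M : Set E}
    (hM : IsPerfectMatching ends M) (hg₂M : g₂ ∈ M) :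
    g₁ ∈ Mᶜ ∧ f 0 ∈ Mᶜ ∧ f 3 ∈ Mᶜ ∧ f 2 ∈ Mᶜ := by
  have hc1g₁ : c 1 ∈ ends g₁ := by rw [hg₁]; exact Sym2.mem_mk_left _ _
  have htg₁ : t ∈ ends g₁ := by rw [hg₁]; exact Sym2.mem_mk_right _ _
  have htg₂ : t ∈ ends g₂ := by rw [hg₂]; exact Sym2.mem_mk_left _ _
  have hc0g₂ : c 0 ∈ ends g₂ := by rw [hg₂]; exact Sym2.mem_mk_right _ _
  have hg₁f := hsq.notMem_range_of_mem_ends ht htg₁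
  have hg₂f := hsq.notMem_range_of_mem_ends ht htg₂
  have hg₁₂ : g₁ ≠ g₂ := by
    intro h
    rw [h, hg₂, Sym2.eq_iff] at hg₁
    rcases hg₁ with ⟨h, -⟩ | ⟨-, h⟩
    · exact ht ⟨1, h.symm⟩
    · exact absurd (hsq.1 h) (by decide)
  have hcompl {g : E} {v : V} (hv : v ∈ ends g₂) (hvg : v ∈ ends g) (hne : g ≠ g₂) : g ∈ Mᶜ :=
    fun hgM => hne (hM.eq_of_mem_ends hg₂M hgM hv hvg)
  have hf0 : f 0 ∈ Mᶜ := hcompl hc0g₂ (hsq.mem_ends_left 0) fun h => hg₂f ⟨0, h⟩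
  have hf3 : f 3 ∈ Mᶜ := hcompl hc0g₂ (hsq.mem_ends_right 3) fun h => hg₂f ⟨3, h⟩
  have hg₁F : g₁ ∈ Mᶜ := hcompl htg₂ htg₁ hg₁₂
  -- `c 1` already has its two `Mᶜ`-edges `f 0` and `g₁`
  have hf1 : f 1 ∈ M := Set.notMem_compl_iff.mp <|
    (hM.isTwoFactor_compl hc).notMem_of_mem_ends ⟨hf0, hsq.mem_ends_right 0⟩ ⟨hg₁F, hc1g₁⟩
      (hsq.mem_ends_left 1) (fun h => hg₁f ⟨0, h⟩) (fun h => absurd (hsq.2.1 h) (by decide))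
      fun h => hg₁f ⟨1, h⟩
  have hf2 : f 2 ∈ Mᶜ := fun hf2M =>
    absurd (hsq.2.1 (hM.eq_of_mem_ends hf1 hf2M (hsq.mem_ends_right 1) (hsq.mem_ends_left 2)))
      (by decide)
  exact ⟨hg₁F, hf0, hf3, hf2⟩

open Finset Classical in
lemma card_filter_mem_ends [Fintype V] (hl : NoLoops ends) (W : Set V) (e : E) :
    #{v ∈ W.toFinset | v ∈ ends e} =
      2 * (if e ∈ inner ends W then 1 else 0) + (if e ∈ cut ends W then 1 else 0) := by
  obtain ⟨x, y, hxy⟩ := exists_ends_eq ends e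
  have hne : x ≠ y := fun h => hl e (by simp [hxy, h])
  have hfilter : {v ∈ W.toFinset | v ∈ ends e} = ({x, y} : Finset V).filter (· ∈ W) := by
    ext v; simp [hxy, and_comm]
  rw [hfilter, mem_inner_iff hxy, mem_cut_iff hxy, Finset.filter_insert, Finset.filter_singleton]
  by_cases hx : x ∈ W <;> by_cases hy : y ∈ W <;> simp [hx, hy, hne]

variable [Fintype V] [Fintype E]

open Finset Classical in
lemma mul_ncard_eq_of_regular (hl : NoLoops ends) {F : Set E} {k : ℕ}
    (hF : ∀ v, {e | e ∈ F ∧ v ∈ ends e}.ncard = k) (W : Set V) :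
    k * W.ncard = 2 * (F ∩ inner ends W).ncard + (F ∩ cut ends W).ncard := by
  calc k * W.ncard = ∑ v ∈ W.toFinset, #{e ∈ F.toFinset | v ∈ ends e} := by
        rw [Finset.sum_congr rfl fun v _ => ?_, sum_const, smul_eq_mul, mul_comm,
          Set.ncard_eq_toFinset_card']
        rw [← hF v, Set.ncard_eq_toFinset_card']
        congr 1; ext; simp
    _ = ∑ e ∈ F.toFinset, #{v ∈ W.toFinset | v ∈ ends e} :=
        sum_card_bipartiteAbove_eq_sum_card_bipartiteBelow (r := fun v e => v ∈ ends e)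
    _ = ∑ e ∈ F.toFinset,
          (2 * (if e ∈ inner ends W then 1 else 0) + (if e ∈ cut ends W then 1 else 0)) :=
        sum_congr rfl fun e _ => card_filter_mem_ends hl W e
    _ = 2 * (F ∩ inner ends W).ncard + (F ∩ cut ends W).ncard := by
        have hcard (S : Set E) : #{e ∈ F.toFinset | e ∈ S} = (F ∩ S).ncard := by
          rw [Set.ncard_eq_toFinset_card']; congr 1; ext; simp
        rw [sum_add_distrib, ← mul_sum, sum_boole, sum_boole, hcard, hcard, Nat.cast_id,
          Nat.cast_id]

lemma IsCubic.three_mul_ncard_eq (hc : IsCubic ends) (hl : NoLoops ends) (W : Set V) :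
    3 * W.ncard = 2 * (inner ends W).ncard + (cut ends W).ncard := by
  simpa using mul_ncard_eq_of_regular hl (F := Set.univ) (fun v => by simpa using hc v) W

lemma IsTwoFactor.even_ncard_inter_cut {F : Set E} (hF : IsTwoFactor ends F)
    (hl : NoLoops ends) (W : Set V) : Even (F ∩ cut ends W).ncard := by
  have := mul_ncard_eq_of_regular hl hF W
  rw [Nat.even_iff]
  omega

lemma IsCubic.even_card (hc : IsCubic ends) (hl : NoLoops ends) : Even (Nat.card V) := by
  have h := hc.three_mul_ncard_eq hl Set.univ
  have hcut : cut ends (Set.univ : Set V) = ∅ := by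
    ext e; simp [cut]
  rw [hcut, Set.ncard_empty, Set.ncard_univ] at h
  rw [Nat.even_iff]
  omega

lemma three_le_ncard_cut (hl : NoLoops ends) (hc : IsCubic ends) (hb : Bridgeless ends)
    (hconn : Connected ends) {W : Set V} (hW : Odd W.ncard) : 3 ≤ (cut ends W).ncard := by
  have hne : W.Nonempty := Set.nonempty_of_ncard_ne_zero (by rintro h; simp [h] at hW)
  have hne' : Wᶜ.Nonempty := by
    refine Set.nonempty_compl.mpr fun h => ?_
    rw [h, Set.ncard_univ] at hW
    exact Nat.not_even_iff_odd.mpr hW (hc.even_card hl)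
  have h2 := two_le_ncard_cut hb hconn hne hne'
  have h3 := hc.three_mul_ncard_eq hl W
  obtain ⟨k, hk⟩ := hW
  omega

lemma three_mul_ncard_oddComponents_le (hl : NoLoops ends) (hc : IsCubic ends)
    (hb : Bridgeless ends) (hconn : Connected ends) {X : Type} {L : SimpleGraph X} {ι : X → V}
    (hι : Function.Injective ι) (hL : ∀ x y, (simpleGraph ends).Adj (ι x) (ι y) → L.Adj x y) :
    3 * L.oddComponents.ncard ≤ (cut ends (Set.range ι)).ncard := by
  have : Finite X := Finite.of_injective ι hι
  have : Fintype L.oddComponents := Fintype.ofFinite _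
  let S (K : L.ConnectedComponent) : Set V := ι '' K.supp
  have hout (K : L.ConnectedComponent) {e : E} (he : e ∈ cut ends (S K)) :
      ∃ v w, ends e = s(v, w) ∧ v ∈ S K ∧ w ∉ Set.range ι := by
    obtain ⟨v, w, hvw, ⟨x, hx, rfl⟩, hw⟩ := he
    refine ⟨ι x, w, hvw, ⟨x, hx, rfl⟩, ?_⟩
    rintro ⟨y, rfl⟩
    exact hw ⟨y, (K.mem_supp_congr_adj (hL x y (simpleGraph_adj_of_ends hl hvw))).mp hx, rfl⟩
  have hsub (K : L.ConnectedComponent) : cut ends (S K) ⊆ cut ends (Set.range ι) := by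
    intro e he
    obtain ⟨-, w, hvw, ⟨x, -, rfl⟩, hw⟩ := hout K he
    exact ⟨ι x, w, hvw, ⟨x, rfl⟩, hw⟩
  have hdisj : Pairwise (Function.onFun Disjoint fun K : L.oddComponents => cut ends (S K)) := by
    intro K K' hKK'
    refine Set.disjoint_left.mpr fun e he he' => ?_
    obtain ⟨-, w, hvw, ⟨x, hx, rfl⟩, hw⟩ := hout K he
    obtain ⟨-, w', hvw', ⟨x', hx', rfl⟩, hw'⟩ := hout K' he'
    rcases Sym2.eq_iff.mp (hvw.symm.trans hvw') with ⟨hxx', -⟩ | ⟨-, hwx'⟩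
    · rw [hι hxx'] at hx
      exact hKK' (Subtype.ext (hx.symm.trans hx'))
    · exact hw ⟨x', hwx'.symm⟩
  have hodd (K : L.oddComponents) : Odd (S K).ncard := by
    rw [Set.ncard_image_of_injective _ hι]
    exact K.2
  calc 3 * L.oddComponents.ncard = ∑ _K : L.oddComponents, 3 := by
        rw [Finset.sum_const, Finset.card_univ, Fintype.card_eq_nat_card, Nat.card_coe_set_eq,
          smul_eq_mul, mul_comm]
    _ ≤ ∑ K : L.oddComponents, (cut ends (S K)).ncard :=
        Finset.sum_le_sum fun K _ => three_le_ncard_cut hl hc hb hconn (hodd K)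
    _ = (⋃ K : L.oddComponents, cut ends (S K)).ncard := by
        rw [Set.ncard_iUnion_of_finite (fun _ => Set.toFinite _) hdisj, finsum_eq_sum_of_fintype]
    _ ≤ (cut ends (Set.range ι)).ncard :=
        Set.ncard_le_ncard (Set.iUnion_subset fun K => hsub K)

lemma not_isTutteViolator (hl : NoLoops ends) (hc : IsCubic ends) (hb : Bridgeless ends)
    (hconn : Connected ends) {e : E} {a t : V} (he : ends e = s(a, t))
    (u : Set ↥({a, t} : Set V)ᶜ) :
    ¬ ((simpleGraph ends).induce ({a, t} : Set V)ᶜ).IsTutteViolator u := by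
  set H := (simpleGraph ends).induce ({a, t} : Set V)ᶜ
  set L := ((⊤ : H.Subgraph).deleteVerts u).coe
  let ι : ((⊤ : H.Subgraph).deleteVerts u).verts → V := fun x => x.1.1
  have hι : Function.Injective ι := Subtype.val_injective.comp Subtype.val_injective
  -- `T := (range ι)ᶜ = {a, t} ∪ u` contains the edge `e`, so
  -- `3 * #odd ≤ |cut T| ≤ 3 * |T| - 2 = 3 * |u| + 4`; and `#odd ≡ |V| - |T| ≡ |u| (mod 2)`.
  have hodd : 3 * L.oddComponents.ncard ≤ (cut ends (Set.range ι)ᶜ).ncard := by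
    rw [cut_compl]
    exact three_mul_ncard_oddComponents_le hl hc hb hconn hι fun x y h => by
      simpa [L, H, ι, x.2.2, y.2.2] using h
  have hcount := hc.three_mul_ncard_eq hl (Set.range ι)ᶜ
  have hinner : 1 ≤ (inner ends (Set.range ι)ᶜ).ncard := by
    refine Nat.one_le_iff_ne_zero.mpr (Set.ncard_ne_zero_of_mem (a := e) ?_)
    rw [mem_inner_iff he]
    constructor <;> rintro ⟨x, hx⟩ <;> simpa [ι, hx] using x.1.2
  have hT := Set.ncard_compl_add_ncard (Set.range ι)
  have hat : a ≠ t := fun h => hl e (by simp [he, h])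
  have hpair := Set.ncard_add_ncard_compl ({a, t} : Set V)
  rw [Set.ncard_pair hat] at hpair
  have hu : u.ncard ≤ ({a, t} : Set V)ᶜ.ncard :=
    (Set.ncard_le_card u).trans_eq (Nat.card_coe_set_eq _)
  have hrange : (Set.range ι).ncard = ({a, t} : Set V)ᶜ.ncard - u.ncard := by
    rw [Set.ncard_range_of_injective hι, Nat.card_coe_set_eq,
      SimpleGraph.Subgraph.deleteVerts_verts, SimpleGraph.Subgraph.verts_top,
      Set.ncard_sdiff (Set.subset_univ u), Set.ncard_univ, Nat.card_coe_set_eq]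
  have hpar := SimpleGraph.odd_ncard_oddComponents L
  rw [← Set.ncard_range_of_injective hι, Nat.odd_iff, Nat.odd_iff] at hpar
  have hV := Nat.even_iff.mp (hc.even_card hl)
  change ¬ u.ncard < L.oddComponents.ncard
  omega

theorem exists_isPerfectMatching_mem (hl : NoLoops ends) (hc : IsCubic ends)
    (hb : Bridgeless ends) (hconn : Connected ends) (e : E) :
    ∃ M, IsPerfectMatching ends M ∧ e ∈ M := by
  classical
  obtain ⟨a, t, he⟩ := exists_ends_eq ends e
  set U := ({a, t} : Set V)ᶜ
  obtain ⟨N, hN⟩ := SimpleGraph.tutte.mpr (not_isTutteViolator hl hc hb hconn he)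
  have hN' := SimpleGraph.Subgraph.isPerfectMatching_iff.mp hN
  choose m hm using fun x => (hN' x).exists
  have hmm (x : U) : m (m x) = x := ((hN' (m x)).unique (hm (m x)) (hm x).symm)
  let pick (z : Sym2 V) : E := if h : ∃ g, ends g = z then h.choose else e
  have hpick (x : U) : ends (pick s(x.1, (m x).1)) = s(x.1, (m x).1) := by
    have h : ∃ g, ends g = s(x.1, (m x).1) := exists_ends_of_simpleGraph_adj (N.adj_sub (hm x))
    simp only [pick, dif_pos h]
    exact h.choose_spec
  let p (v : V) : E := if hv : v ∈ U then pick s(v, (m ⟨v, hv⟩).1) else e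
  have hpU (x : U) : p x.1 = pick s(x.1, (m x).1) := dif_pos x.2
  have hpa {v : V} (hv : v ∉ U) : p v = e := dif_neg hv
  refine ⟨Set.range p, isPerfectMatching_range (fun v => ?_) (fun v w hw => ?_), a,
    hpa (by simp [U])⟩
  · by_cases hv : v ∈ U
    · rw [hpU ⟨v, hv⟩, hpick]; exact Sym2.mem_mk_left _ _
    · rw [hpa hv, he]; simpa [U, or_iff_not_imp_left] using hv
  · by_cases hv : v ∈ U
    · rw [hpU ⟨v, hv⟩, hpick, Sym2.mem_iff] at hw
      rw [hpU ⟨v, hv⟩]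
      rcases hw with rfl | rfl
      · rw [hpU ⟨w, hv⟩]
      · rw [hpU (m ⟨v, hv⟩), hmm, Sym2.eq_swap]
    · rw [hpa hv, he] at hw
      rw [hpa hv]
      exact hpa (by simpa [U, or_iff_not_imp_left] using hw)

lemma exists_isTwoFactor_disjoint_cut (hl : NoLoops ends) (hc : IsCubic ends)
    (hb : Bridgeless ends) (hconn : Connected ends) {W : Set V} (hW : W.Nonempty)
    (hcut : (cut ends W).ncard ≤ 2) : ∃ F, IsTwoFactor ends F ∧ Disjoint F (cut ends W) := by
  rcases (cut ends W).eq_empty_or_nonempty with h | ⟨e, he⟩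
  · obtain ⟨v, -⟩ := hW
    obtain ⟨e, -⟩ : {e | v ∈ ends e}.Nonempty := Set.nonempty_of_ncard_ne_zero (by simp [hc v])
    obtain ⟨M, hM, -⟩ := exists_isPerfectMatching_mem hl hc hb hconn e
    exact ⟨Mᶜ, hM.isTwoFactor_compl hc, h ▸ Set.disjoint_empty _⟩
  · obtain ⟨M, hM, heM⟩ := exists_isPerfectMatching_mem hl hc hb hconn e
    have hF := hM.isTwoFactor_compl hc
    refine ⟨Mᶜ, hF, ?_⟩
    -- `Mᶜ` crosses the cut an even number of times, but not through `e`
    have hsub : Mᶜ ∩ cut ends W ⊆ cut ends W \ {e} :=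
      fun g ⟨hgM, hg⟩ => ⟨hg, fun hge => hgM (hge ▸ heM)⟩
    have h1 := Set.ncard_le_ncard hsub
    rw [Set.ncard_sdiff_singleton_of_mem he] at h1
    have h2 := hF.even_ncard_inter_cut hl W
    rw [Nat.even_iff] at h2
    rw [Set.disjoint_iff_inter_eq_empty, ← Set.ncard_eq_zero]
    omega

lemma five_le_ncard_of_ncard_cut_le_two (hl : NoLoops ends) (hc : IsCubic ends)
    (hb : Bridgeless ends) (hconn : Connected ends) (h5 : TwoFactorsAllC5 ends) {W : Set V}
    (hW : W.Nonempty) (hcut : (cut ends W).ncard ≤ 2) : 5 ≤ W.ncard := by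
  obtain ⟨F, hF, hFW⟩ := exists_isTwoFactor_disjoint_cut hl hc hb hconn hW hcut
  obtain ⟨v, hv⟩ := hW
  rw [← h5 F hF v]
  exact Set.ncard_le_ncard (component_subset hFW hv)

theorem false_of_square_chord (hl : NoLoops ends) (hc : IsCubic ends) (hb : Bridgeless ends)
    (hconn : Connected ends) (h5 : TwoFactorsAllC5 ends) {c : ZMod 4 → V} {f : ZMod 4 → E}
    (hsq : IsCycle ends c f) {g : E} (hg : ends g = s(c 0, c 2)) : False := by
  have hgf : g ∉ Set.range f := by
    rintro ⟨k, rfl⟩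
    rcases hsq.eq_of_ends_eq hg with ⟨rfl, h⟩ | ⟨h, rfl⟩ <;> exact absurd h (by decide)
  have hinner : insert g (Set.range f) ⊆ inner ends (Set.range c) :=
    Set.insert_subset ((mem_inner_iff hg).mpr ⟨⟨0, rfl⟩, ⟨2, rfl⟩⟩) hsq.range_subset_inner
  have h5le := Set.ncard_le_ncard hinner
  rw [Set.ncard_insert_of_notMem hgf, hsq.ncard_range_edges] at h5le
  have hcount := hc.three_mul_ncard_eq hl (Set.range c)
  rw [hsq.ncard_range] at hcount
  have hW := five_le_ncard_of_ncard_cut_le_two hl hc hb hconn h5 (Set.range_nonempty c)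
    (by omega)
  rw [hsq.ncard_range] at hW
  omega

theorem false_of_square_common_neighbour (hl : NoLoops ends) (hc : IsCubic ends)
    (hb : Bridgeless ends) (hconn : Connected ends) (h5 : TwoFactorsAllC5 ends)
    {c : ZMod 4 → V} {f : ZMod 4 → E} (hsq : IsCycle ends c f) {t : V} (ht : t ∉ Set.range c)
    {g₁ g₂ : E} (hg₁ : ends g₁ = s(c 1, t)) (hg₂ : ends g₂ = s(t, c 0)) : False := by
  have htg₁ : t ∈ ends g₁ := by rw [hg₁]; exact Sym2.mem_mk_right _ _
  obtain ⟨M, hM, hg₂M⟩ := exists_isPerfectMatching_mem hl hc hb hconn g₂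
  obtain ⟨hg₁F, hf0, hf3, hf2⟩ :=
    mem_compl_of_square_common_neighbour hc hsq ht hg₁ hg₂ hM hg₂M
  have hF := hM.isTwoFactor_compl hc
  obtain ⟨g₃, ⟨hg₃F, htg₃⟩, hg₃₁⟩ := Set.exists_ne_of_one_lt_ncard (by rw [hF t]; norm_num) g₁
  set W := component ends Mᶜ (c 0)
  have hc0 : c 0 ∈ W := Relation.ReflTransGen.refl
  have hc1 := mem_component_of_mem_ends hc0 hf0 (hsq.mem_ends_left 0) (hsq.mem_ends_right 0)
  have hc3 := mem_component_of_mem_ends hc0 hf3 (hsq.mem_ends_right 3) (hsq.mem_ends_left 3)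
  have hc2 := mem_component_of_mem_ends hc3 hf2 (hsq.mem_ends_right 2) (hsq.mem_ends_left 2)
  have htW := mem_component_of_mem_ends hc1 hg₁F (by rw [hg₁]; exact Sym2.mem_mk_left _ _) htg₁
  have hrange : Set.range c ⊆ W := by
    rintro _ ⟨k, rfl⟩
    obtain rfl | rfl | rfl | rfl : k = 0 ∨ k = 1 ∨ k = 2 ∨ k = 3 := by revert k; decide
    exacts [hc0, hc1, hc2, hc3]
  -- the 5-cycle `W` spans seven edges
  have hinner : insert g₃ (insert g₁ (insert g₂ (Set.range f))) ⊆ inner ends W :=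
    Set.insert_subset (fun v hv => mem_component_of_mem_ends htW hg₃F htg₃ hv) <|
      Set.insert_subset ((mem_inner_iff hg₁).mpr ⟨hc1, htW⟩) <|
      Set.insert_subset ((mem_inner_iff hg₂).mpr ⟨htW, hc0⟩) <|
      hsq.range_subset_inner.trans (inner_mono hrange)
  have hoff {g : E} (hg : t ∈ ends g) : g ∉ Set.range f := hsq.notMem_range_of_mem_ends ht hg
  have h7 := Set.ncard_le_ncard hinner
  rw [Set.ncard_insert_of_notMem (by
      rintro (h | h | h)
      exacts [hg₃₁ h, hg₃F (h ▸ hg₂M), hoff htg₃ h]),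
    Set.ncard_insert_of_notMem (by
      rintro (h | h)
      exacts [hg₁F (h ▸ hg₂M), hoff htg₁ h]),
    Set.ncard_insert_of_notMem (hoff (by rw [hg₂]; exact Sym2.mem_mk_left _ _)),
    hsq.ncard_range_edges] at h7
  have hW5 : W.ncard = 5 := h5 Mᶜ hF (c 0)
  have h3 := three_le_ncard_cut hl hc hb hconn (W := W) (by rw [hW5]; decide)
  have hcount := hc.three_mul_ncard_eq hl W
  omega

theorem false_of_square_triangle (hl : NoLoops ends) (hc : IsCubic ends) (hb : Bridgeless ends)
    (hconn : Connected ends) (h5 : TwoFactorsAllC5 ends) {c : ZMod 4 → V} {f : ZMod 4 → E}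
    {c' : ZMod 3 → V} {f' : ZMod 3 → E} (hsq : IsCycle ends c f) (htr : IsCycle ends c' f')
    (h0 : c' 0 = c 0) (h1 : c' 1 = c 1) : False := by
  have hf'1 : ends (f' 1) = s(c 1, c' 2) := by rw [htr.2.2, h1]; rfl
  have hf'2 : ends (f' 2) = s(c' 2, c 0) := by rw [htr.2.2, ← h0]; rfl
  by_cases ht : c' 2 ∈ Set.range c
  · obtain ⟨k, hk⟩ := ht
    have hk0 : k ≠ 0 := fun h => absurd (htr.1 (h0.trans (h ▸ hk))) (by decide)
    have hk1 : k ≠ 1 := fun h => absurd (htr.1 (h1.trans (h ▸ hk))) (by decide)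
    obtain rfl | rfl : k = 2 ∨ k = 3 := by clear hk; revert k; decide
    · exact false_of_square_chord hl hc hb hconn h5 hsq (hf'2.trans (by rw [← hk, Sym2.eq_swap]))
    · exact false_of_square_chord hl hc hb hconn h5 (hsq.rotate 1) (hf'1.trans (by rw [← hk]; rfl))
  · exact false_of_square_common_neighbour hl hc hb hconn h5 hsq ht hf'1 hf'2

end Mg

theorem stmt5 {V E : Type} [Fintype V] [Fintype E] (ends : E → Sym2 V)
    (hl : Mg.NoLoops ends) (hc : Mg.IsCubic ends) (hb : Mg.Bridgeless ends)
    (hconn : Mg.Connected ends) (h5 : Mg.TwoFactorsAllC5 ends) :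
    ¬ ∃ (c : ZMod 4 → V) (f : ZMod 4 → E) (c' : ZMod 3 → V) (f' : ZMod 3 → E),
      (Function.Injective c ∧ Function.Injective f ∧
        ∀ i, ends (f i) = s(c i, c (i + 1))) ∧
      (Function.Injective c' ∧ Function.Injective f' ∧
        ∀ i, ends (f' i) = s(c' i, c' (i + 1))) ∧
      (Set.range f ∩ Set.range f').Nonempty := by
  rintro ⟨c, f, c', f', hsq, htr, _, ⟨i, hi⟩, ⟨j, hj⟩⟩
  have hsq : Mg.IsCycle ends c f := hsq
  have htr : Mg.IsCycle ends c' f' := htr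
  have hshared : s(c' j, c' (j + 1)) = s(c i, c (i + 1)) := by
    rw [← htr.2.2, ← hsq.2.2, hi, hj]
  rcases Sym2.eq_iff.mp hshared with ⟨h0, h1⟩ | ⟨h0, h1⟩
  · exact Mg.false_of_square_triangle hl hc hb hconn h5 (hsq.rotate i) (htr.rotate j)
      (by simpa using h0) (by simpa using h1)
  · exact Mg.false_of_square_triangle hl hc hb hconn h5 (hsq.rotate i) (htr.rotate j).reflect
      (by simpa using h1) (by simpa using h0)
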